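/- arXiv:2208.05138 — 7 statements merged into one kernel-verified Lean document; each statement's English description precedes it below -/
import Mathlib

section
/- Let n ≥ 1, let c_1, ..., c_n be real numbers, and let λ ∈ ℝ satisfy 1 + λ c_u > 0 for all u and Σ_{u=1}^n c_u/(1 + λ c_u) = 0. Set π_u := 1/(n(1 + λ c_u)). Then for every p_1, ..., p_n with p_u > 0 for all u, Σ_{u=1}^n p_u = 1, and Σ_{u=1}^n c_u p_u = 0, one has Σ_{u=1}^n log p_u ≤ Σ_{u=1}^n log π_u = −Σ_{u=1}^n log(n(1 + λ c_u)). In particular, the supremum of Σ log p_u over the constrained simplex is attained at (π_1, ..., π_n). -/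
open Finset

/-- Optimality of the profiled empirical-likelihood weights: for every
probability vector `p` satisfying the linear constraint `∑ u, c u * p u = 0`,
the empirical log-likelihood `∑ u, log (p u)` is at most its value at
`π u = 1/(n(1 + λ c u))`, which equals `-∑ u, log (n (1 + λ c u))`. -/
theorem profiled_weights_maximize (n : ℕ) (hn : 1 ≤ n) (c : Fin n → ℝ)
    (lam : ℝ) (hpos : ∀ u, 0 < 1 + lam * c u)
    (hzero : ∑ u, c u / (1 + lam * c u) = 0) :
    (∀ p : Fin n → ℝ, (∀ u, 0 < p u) → ∑ u, p u = 1 → ∑ u, c u * p u = 0 →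
      ∑ u, Real.log (p u) ≤ ∑ u, Real.log (1 / (n * (1 + lam * c u)))) ∧
    ∑ u, Real.log (1 / (n * (1 + lam * c u)))
      = -∑ u, Real.log (n * (1 + lam * c u)) := by
  have hn0 : (0:ℝ) < n := by exact_mod_cast hn
  have hq : ∀ u, 0 < (n:ℝ) * (1 + lam * c u) := fun u => mul_pos hn0 (hpos u)
  constructor
  · intro p hp hsum hc
    rw [← sub_nonpos, ← Finset.sum_sub_distrib]
    have key : ∀ u ∈ (univ : Finset (Fin n)),
        Real.log (p u) - Real.log (1 / (n * (1 + lam * c u)))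
          ≤ (n:ℝ) * (1 + lam * c u) * p u - 1 := by
      intro u _
      have h1 : Real.log (p u) - Real.log (1 / (n * (1 + lam * c u)))
          = Real.log ((n:ℝ) * (1 + lam * c u) * p u) := by
        rw [one_div, Real.log_inv, sub_neg_eq_add,
          Real.log_mul (ne_of_gt (hq u)) (ne_of_gt (hp u))]
        ring
      rw [h1]
      exact Real.log_le_sub_one_of_pos (mul_pos (hq u) (hp u))
    refine le_trans (Finset.sum_le_sum key) (le_of_eq ?_)
    have h2 : ∑ u, (n:ℝ) * (1 + lam * c u) * p u
        = (n:ℝ) * (∑ u, p u) + (n:ℝ) * lam * (∑ u, c u * p u) := by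
      rw [Finset.mul_sum, Finset.mul_sum, ← Finset.sum_add_distrib]
      exact Finset.sum_congr rfl fun u _ => by ring
    rw [Finset.sum_sub_distrib, h2, hsum, hc, Finset.sum_const, card_univ,
      Fintype.card_fin]
    simp
  · rw [← Finset.sum_neg_distrib]
    refine Finset.sum_congr rfl fun u _ => ?_
    rw [one_div, Real.log_inv]
end

section
/- Let W be a finite type, P : W → ℝ a probability mass function, L_0 : W → [0,1], f := Σ_w P(w) L_0(w) ∈ (0,1), a_0, a_1 > 0 with a_0 + a_1 = 1, λ_0 := a_1/f − a_0/(1−f), and Q(w) := a_1 P(w) L_0(w)/f + a_0 P(w)(1 − L_0(w))/(1−f). Then Σ_w Q(w) (L_0(w) − f)/(1 + λ_0 (L_0(w) − f)) = 0; that is, λ_0 solves the population version of the Lagrange multiplier equation. -/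
open Finset

/-!
Under the case-control design the density of `Q` with respect to `P` is
`a₁ L₀ / f + a₀ (1 - L₀) / (1 - f)`, which (as `a₀ + a₁ = 1`) is exactly `1 + λ₀ (L₀ - f)`.
So each summand collapses to `P w (L₀ w - f)`, whose sum is `f - f = 0`.
-/

theorem caseControl_density_eq_one_add_mul {K : Type*} [Field K] {a₀ a₁ f : K}
    (ha : a₀ + a₁ = 1) (hf0 : f ≠ 0) (hf1 : 1 - f ≠ 0) (L : K) :
    a₁ * L / f + a₀ * (1 - L) / (1 - f) = 1 + (a₁ / f - a₀ / (1 - f)) * (L - f) := by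
  obtain rfl : a₀ = 1 - a₁ := by linear_combination ha
  field_simp
  ring

theorem caseControl_density_pos {K : Type*} [Field K] [LinearOrder K] [IsStrictOrderedRing K]
    {a₀ a₁ f L : K} (ha₀ : 0 < a₀) (ha₁ : 0 < a₁) (hf0 : 0 < f) (hf1 : f < 1)
    (hL0 : 0 ≤ L) (hL1 : L ≤ 1) :
    0 < a₁ * L / f + a₀ * (1 - L) / (1 - f) := by
  have hf1' : 0 < 1 - f := sub_pos.mpr hf1
  rcases hL0.eq_or_lt with rfl | hL
  · simpa using div_pos ha₀ hf1'
  · exact add_pos_of_pos_of_nonneg (by positivity) (div_nonneg (by nlinarith) hf1'.le)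

theorem sum_mul_sub_eq_zero {ι R : Type*} [CommRing R] (s : Finset ι) (p x : ι → R)
    (hp : ∑ i ∈ s, p i = 1) : ∑ i ∈ s, p i * (x i - ∑ j ∈ s, p j * x j) = 0 := by
  simp only [mul_sub, sum_sub_distrib, ← sum_mul, hp, one_mul, sub_self]

theorem lambda0_solves_population_equation_general {W : Type*} [Fintype W]
    (P : W → ℝ) (hP_sum : ∑ w, P w = 1)
    (L₀ : W → ℝ) (hL₀ : ∀ w, 0 ≤ L₀ w ∧ L₀ w ≤ 1)
    (f : ℝ) (hf : f = ∑ w, P w * L₀ w) (hf0 : 0 < f) (hf1 : f < 1)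
    (a₀ a₁ : ℝ) (ha₀ : 0 < a₀) (ha₁ : 0 < a₁) (ha : a₀ + a₁ = 1)
    (lam₀ : ℝ) (hlam : lam₀ = a₁ / f - a₀ / (1 - f))
    (Q : W → ℝ)
    (hQ : ∀ w, Q w = a₁ * P w * L₀ w / f + a₀ * P w * (1 - L₀ w) / (1 - f)) :
    ∑ w, Q w * (L₀ w - f) / (1 + lam₀ * (L₀ w - f)) = 0 := by
  have hdensity (w : W) :
      a₁ * L₀ w / f + a₀ * (1 - L₀ w) / (1 - f) = 1 + lam₀ * (L₀ w - f) := by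
    rw [hlam]
    exact caseControl_density_eq_one_add_mul ha hf0.ne' (sub_ne_zero.mpr hf1.ne') (L₀ w)
  have hterm (w : W) : Q w * (L₀ w - f) / (1 + lam₀ * (L₀ w - f)) = P w * (L₀ w - f) := by
    have hpos := caseControl_density_pos ha₀ ha₁ hf0 hf1 (hL₀ w).1 (hL₀ w).2
    have hQw : Q w = P w * (1 + lam₀ * (L₀ w - f)) := by
      rw [hQ, ← hdensity]
      ring
    rw [hdensity] at hpos
    rw [hQw]
    field_simp
  simp only [hterm]
  rw [hf]
  exact sum_mul_sub_eq_zero univ P L₀ hP_sum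

/-- `λ₀ = a₁/f - a₀/(1-f)` solves the population version of the Lagrange
multiplier equation under the case-control sampling distribution `Q`. -/
theorem lambda0_solves_population_equation {W : Type*} [Fintype W]
    (P : W → ℝ) (hP_nonneg : ∀ w, 0 ≤ P w) (hP_sum : ∑ w, P w = 1)
    (L₀ : W → ℝ) (hL₀ : ∀ w, 0 ≤ L₀ w ∧ L₀ w ≤ 1)
    (f : ℝ) (hf : f = ∑ w, P w * L₀ w) (hf0 : 0 < f) (hf1 : f < 1)
    (a₀ a₁ : ℝ) (ha₀ : 0 < a₀) (ha₁ : 0 < a₁) (ha : a₀ + a₁ = 1)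
    (lam₀ : ℝ) (hlam : lam₀ = a₁ / f - a₀ / (1 - f))
    (Q : W → ℝ)
    (hQ : ∀ w, Q w = a₁ * P w * L₀ w / f + a₀ * P w * (1 - L₀ w) / (1 - f)) :
    ∑ w, Q w * (L₀ w - f) / (1 + lam₀ * (L₀ w - f)) = 0 :=
  lambda0_solves_population_equation_general P hP_sum L₀ hL₀ f hf hf0 hf1 a₀ a₁ ha₀ ha₁ ha lam₀ hlam
    Q hQ
end

section
/- In the discrete case-control model, the expected complete-data score at the true parameter equals λ_0 times the gradient of the population prevalence: Σ_{y,z,w} (a_y/f_y) P(w) p(Θ_0, y, z, w) · ∇_Θ log p(Θ, y, z, w)|_{Θ=Θ_0} = λ_0 Σ_w P(w) ∇_Θ L(Θ, w)|_{Θ=Θ_0}, where f_true := f and f_false := 1 − f. -/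
/-!
Multiplying the score `∇ log p` by `p` gives `∇ p`, so for each `w` the expected score is
`P w • (a₁ / f • ∇ L_true - a₀ / (1 - f) • ∇ L_false)`, where `L_y = Σ_z p(·, y, z, w)`.
Since `L_true + L_false = 1` identically, `∇ L_false = -∇ L_true`, which leaves `λ₀ • P w • ∇ L_true`.
-/

open Finset

section Calculus

variable {E : Type*} [NormedAddCommGroup E] [NormedSpace ℝ E]

theorem smul_fderiv_log {g : E → ℝ} {x : E} (hg : DifferentiableAt ℝ g x) (hx : g x ≠ 0) :
    g x • fderiv ℝ (fun y => Real.log (g y)) x = fderiv ℝ g x := by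
  rw [fderiv.log hg hx, smul_smul, mul_inv_cancel₀ hx, one_smul]

theorem sum_mul_smul_fderiv_log {ι : Type*} (s : Finset ι) (c : ℝ) {g : ι → E → ℝ} {x : E}
    (hg : ∀ i ∈ s, DifferentiableAt ℝ (g i) x) (hx : ∀ i ∈ s, g i x ≠ 0) :
    ∑ i ∈ s, (c * g i x) • fderiv ℝ (fun y => Real.log (g i y)) x
      = c • fderiv ℝ (fun y => ∑ i ∈ s, g i y) x := by
  rw [fderiv_fun_sum hg, smul_sum]
  refine sum_congr rfl fun i hi => ?_
  rw [mul_smul, smul_fderiv_log (hg i hi) (hx i hi)]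

end Calculus

theorem sum_fderiv_eq_zero_of_sum_eq_const {𝕜 E F ι : Type*} [NontriviallyNormedField 𝕜]
    [NormedAddCommGroup E] [NormedSpace 𝕜 E] [NormedAddCommGroup F] [NormedSpace 𝕜 F]
    {s : Finset ι} {g : ι → E → F} {x : E} {c : F}
    (hg : ∀ i ∈ s, DifferentiableAt 𝕜 (g i) x) (hsum : ∀ y, ∑ i ∈ s, g i y = c) :
    ∑ i ∈ s, fderiv 𝕜 (g i) x = 0 := by
  rw [← fderiv_fun_sum hg, funext hsum, fderiv_fun_const, Pi.zero_apply]

theorem fderiv_sum_false_eq_neg_fderiv_sum_true {E Z : Type*} [NormedAddCommGroup E]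
    [NormedSpace ℝ E] [Fintype Z] {p : E → Bool → Z → ℝ} {x : E}
    (hp_sum : ∀ y, ∑ b : Bool, ∑ z : Z, p y b z = 1)
    (hp_diff : ∀ b z, DifferentiableAt ℝ (fun y => p y b z) x) :
    fderiv ℝ (fun y => ∑ z, p y false z) x = -fderiv ℝ (fun y => ∑ z, p y true z) x := by
  have h := sum_fderiv_eq_zero_of_sum_eq_const (s := univ) (g := fun b y => ∑ z, p y b z)
    (fun b _ => DifferentiableAt.fun_sum fun z _ => hp_diff b z) hp_sum
  rw [Fintype.sum_bool] at h
  exact eq_neg_of_add_eq_zero_right h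

theorem expected_complete_data_score_general {W Z : Type*} [Fintype W] [Fintype Z]
    (k : ℕ) (p : (Fin k → ℝ) → Bool → Z → W → ℝ) (Θ₀ : Fin k → ℝ)
    (hp_sum : ∀ Θ w, ∑ y : Bool, ∑ z : Z, p Θ y z w = 1)
    (hp_diff : ∀ y z w, DifferentiableAt ℝ (fun Θ => p Θ y z w) Θ₀)
    (hp_pos : ∀ y z w, 0 < p Θ₀ y z w)
    (P : W → ℝ)
    (a₀ a₁ : ℝ)
    (f : ℝ)
    (lam₀ : ℝ) (hlam : lam₀ = a₁ / f - a₀ / (1 - f)) :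
    ∑ y : Bool, ∑ z : Z, ∑ w : W,
      ((if y then a₁ else a₀) / (if y then f else 1 - f) * P w * p Θ₀ y z w) •
        fderiv ℝ (fun Θ => Real.log (p Θ y z w)) Θ₀
      = lam₀ • ∑ w : W, P w • fderiv ℝ (fun Θ => ∑ z : Z, p Θ true z w) Θ₀ := by
  have hscore : ∀ y w, ∑ z, ((if y then a₁ else a₀) / (if y then f else 1 - f) * P w * p Θ₀ y z w) •
      fderiv ℝ (fun Θ => Real.log (p Θ y z w)) Θ₀
      = ((if y then a₁ else a₀) / (if y then f else 1 - f) * P w) •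
        fderiv ℝ (fun Θ => ∑ z, p Θ y z w) Θ₀ := fun y w =>
    sum_mul_smul_fderiv_log univ _ (fun z _ => hp_diff y z w) (fun z _ => (hp_pos y z w).ne')
  have hcancel : ∀ w, fderiv ℝ (fun Θ => ∑ z, p Θ false z w) Θ₀
      = -fderiv ℝ (fun Θ => ∑ z, p Θ true z w) Θ₀ := fun w =>
    fderiv_sum_false_eq_neg_fderiv_sum_true (p := fun Θ y z => p Θ y z w) (hp_sum · w)
      (hp_diff · · w)
  simp_rw [sum_comm (γ := Z), hscore, Fintype.sum_bool, hcancel, if_true, Bool.false_eq_true,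
    if_false, smul_sum, ← sum_add_distrib, smul_smul]
  refine sum_congr rfl fun w _ => ?_
  rw [hlam]
  module

/-- In the discrete case-control model, the expected complete-data score at
the true parameter equals `λ₀` times the gradient of the population
prevalence. Here `y` plays the role of the case-control status (with
`f_true = f`, `f_false = 1 - f`, `a_true = a₁`, `a_false = a₀`),
`L Θ w = ∑ z, p Θ true z w`, and gradients are `fderiv`s in `Θ`. -/
theorem expected_complete_data_score {W Z : Type*} [Fintype W] [Fintype Z]
    (k : ℕ) (p : (Fin k → ℝ) → Bool → Z → W → ℝ) (Θ₀ : Fin k → ℝ)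
    (hp_nonneg : ∀ Θ y z w, 0 ≤ p Θ y z w)
    (hp_sum : ∀ Θ w, ∑ y : Bool, ∑ z : Z, p Θ y z w = 1)
    (hp_diff : ∀ y z w, DifferentiableAt ℝ (fun Θ => p Θ y z w) Θ₀)
    (hp_pos : ∀ y z w, 0 < p Θ₀ y z w)
    (P : W → ℝ) (hP_nonneg : ∀ w, 0 ≤ P w) (hP_sum : ∑ w, P w = 1)
    (a₀ a₁ : ℝ) (ha₀ : 0 < a₀) (ha₁ : 0 < a₁) (ha : a₀ + a₁ = 1)
    (f : ℝ) (hf : f = ∑ w, P w * ∑ z : Z, p Θ₀ true z w)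
    (hf0 : 0 < f) (hf1 : f < 1)
    (lam₀ : ℝ) (hlam : lam₀ = a₁ / f - a₀ / (1 - f)) :
    ∑ y : Bool, ∑ z : Z, ∑ w : W,
      ((if y then a₁ else a₀) / (if y then f else 1 - f) * P w * p Θ₀ y z w) •
        fderiv ℝ (fun Θ => Real.log (p Θ y z w)) Θ₀
      = lam₀ • ∑ w : W, P w • fderiv ℝ (fun Θ => ∑ z : Z, p Θ true z w) Θ₀ :=
  expected_complete_data_score_general k p Θ₀ hp_sum hp_diff hp_pos P a₀ a₁ f lam₀ hlam
end

section
/- In the discrete case-control model, the expected gradient of the correction term log(1 + λ_0 (L(Θ, W) − f)) at the true parameter satisfies Σ_{y,z,w} (a_y/f_y) P(w) p(Θ_0, y, z, w) · ∇_Θ log(1 + λ_0 (L(Θ, w) − f))|_{Θ=Θ_0} = λ_0 Σ_w P(w) ∇_Θ L(Θ, w)|_{Θ=Θ_0}, where f_true := f and f_false := 1 − f. (Note that 1 + λ_0 (L(Θ_0, w) − f) > 0 for all w since 0 ≤ L(Θ_0, w) ≤ 1.) -/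
open Finset

/-!
At `Θ₀` the chain rule gives `∇ log (1 + λ₀ (L - f)) = λ₀ ∇L / (1 + λ₀ (L - f))` for each `w`,
while, since `a₀ + a₁ = 1`, the case-control weight of a fixed `w` is
`P(w) (a₁ L / f + a₀ (1 - L) / (1 - f)) = P(w) (1 + λ₀ (L - f))`.
The two factors cancel, and this denominator is positive because `0 ≤ L ≤ 1`.
-/

theorem fderiv_log_one_add_mul_sub {E : Type*} [NormedAddCommGroup E] [NormedSpace ℝ E]
    {g : E → ℝ} {x : E} (hg : DifferentiableAt ℝ g x) (c t : ℝ)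
    (hx : 1 + c * (g x - t) ≠ 0) :
    fderiv ℝ (fun y => Real.log (1 + c * (g y - t))) x
      = (1 + c * (g x - t))⁻¹ • c • fderiv ℝ g x := by
  have hlin : HasFDerivAt (fun y => 1 + c * (g y - t)) (c • fderiv ℝ g x) x :=
    ((hg.hasFDerivAt.sub_const t).const_mul c).const_add 1
  exact (hlin.log hx).fderiv

theorem sum_bool_mul_sum_eq_of_sum_eq_one {Z : Type*} [Fintype Z] (q : Bool → Z → ℝ)
    (hq : ∑ y : Bool, ∑ z : Z, q y z = 1) (c : Bool → ℝ) :
    ∑ y : Bool, c y * ∑ z : Z, q y z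
      = c true * ∑ z : Z, q true z + c false * (1 - ∑ z : Z, q true z) := by
  rw [Fintype.sum_bool] at hq ⊢
  rw [← hq]
  ring

section CaseControl

variable {a₀ a₁ f : ℝ}

theorem one_add_mul_sub_eq_caseControl_weight (ha : a₀ + a₁ = 1) (hf : f ≠ 0) (hf' : 1 - f ≠ 0)
    (L : ℝ) :
    1 + (a₁ / f - a₀ / (1 - f)) * (L - f) = a₁ / f * L + a₀ / (1 - f) * (1 - L) := by
  obtain rfl : a₀ = 1 - a₁ := by linarith
  field_simp
  ring

theorem one_add_mul_sub_pos (ha₀ : 0 < a₀) (ha₁ : 0 < a₁) (ha : a₀ + a₁ = 1)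
    (hf0 : 0 < f) (hf1 : f < 1) {L : ℝ} (hL0 : 0 ≤ L) (hL1 : L ≤ 1) :
    0 < 1 + (a₁ / f - a₀ / (1 - f)) * (L - f) := by
  have hc₁ : 0 < a₁ / f := div_pos ha₁ hf0
  have hc₀ : 0 < a₀ / (1 - f) := div_pos ha₀ (sub_pos.2 hf1)
  have hc₀L : 0 ≤ a₀ / (1 - f) * (1 - L) := mul_nonneg hc₀.le (sub_nonneg.2 hL1)
  rw [one_add_mul_sub_eq_caseControl_weight ha hf0.ne' (sub_pos.2 hf1).ne']
  rcases hL0.eq_or_lt with rfl | hL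
  · simpa using hc₀
  · nlinarith [mul_pos hc₁ hL]

end CaseControl

theorem expected_correction_score_general {W Z : Type*} [Fintype W] [Fintype Z]
    (k : ℕ) (p : (Fin k → ℝ) → Bool → Z → W → ℝ) (Θ₀ : Fin k → ℝ)
    (hp_nonneg : ∀ Θ y z w, 0 ≤ p Θ y z w)
    (hp_sum : ∀ Θ w, ∑ y : Bool, ∑ z : Z, p Θ y z w = 1)
    (hp_diff : ∀ y z w, DifferentiableAt ℝ (fun Θ => p Θ y z w) Θ₀)
    (P : W → ℝ)
    (a₀ a₁ : ℝ) (ha₀ : 0 < a₀) (ha₁ : 0 < a₁) (ha : a₀ + a₁ = 1)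
    (f : ℝ)
    (hf0 : 0 < f) (hf1 : f < 1)
    (lam₀ : ℝ) (hlam : lam₀ = a₁ / f - a₀ / (1 - f)) :
    ∑ y : Bool, ∑ z : Z, ∑ w : W,
      ((if y then a₁ else a₀) / (if y then f else 1 - f) * P w * p Θ₀ y z w) •
        fderiv ℝ
          (fun Θ => Real.log (1 + lam₀ * ((∑ z' : Z, p Θ true z' w) - f))) Θ₀
      = lam₀ • ∑ w : W, P w • fderiv ℝ (fun Θ => ∑ z : Z, p Θ true z w) Θ₀ := by
  set L : W → ℝ := fun w => ∑ z : Z, p Θ₀ true z w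
  set D : W → ℝ := fun w => 1 + lam₀ * (L w - f)
  have hD_pos (w : W) : 0 < D w := by
    have hfalse : 0 ≤ ∑ z : Z, p Θ₀ false z w := sum_nonneg fun z _ => hp_nonneg Θ₀ false z w
    have hsum := hp_sum Θ₀ w
    rw [Fintype.sum_bool] at hsum
    have := one_add_mul_sub_pos ha₀ ha₁ ha hf0 hf1
      (sum_nonneg fun z _ => hp_nonneg Θ₀ true z w) (by linarith : L w ≤ 1)
    rwa [← hlam] at this
  have hweight (w : W) : ∑ y : Bool, ∑ z : Z,
      (if y then a₁ else a₀) / (if y then f else 1 - f) * P w * p Θ₀ y z w = P w * D w := by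
    simp only [mul_right_comm _ (P w), ← sum_mul, ← mul_sum]
    rw [sum_bool_mul_sum_eq_of_sum_eq_one (fun y z => p Θ₀ y z w) (hp_sum Θ₀ w), mul_comm]
    simp [D, L, hlam, one_add_mul_sub_eq_caseControl_weight ha hf0.ne' (sub_pos.2 hf1).ne']
  have hscore (w : W) :
      fderiv ℝ (fun Θ => Real.log (1 + lam₀ * ((∑ z' : Z, p Θ true z' w) - f))) Θ₀
        = (D w)⁻¹ • lam₀ • fderiv ℝ (fun Θ => ∑ z : Z, p Θ true z w) Θ₀ :=
    fderiv_log_one_add_mul_sub (DifferentiableAt.fun_sum fun z _ => hp_diff true z w) _ _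
      (hD_pos w).ne'
  calc _ = ∑ w : W, (P w * D w) • (D w)⁻¹ • lam₀ •
        fderiv ℝ (fun Θ => ∑ z : Z, p Θ true z w) Θ₀ := by
        simp only [hscore, ← hweight, sum_smul]
        exact (sum_congr rfl fun _ _ => sum_comm).trans sum_comm
    _ = _ := by
        rw [smul_sum]
        refine sum_congr rfl fun w _ => ?_
        simp only [smul_smul]
        congr 1
        field_simp [(hD_pos w).ne']

/-- In the discrete case-control model, the expected gradient of the
correction term `log (1 + λ₀ (L(Θ, W) - f))` at the true parameter equals
`λ₀` times the gradient of the population prevalence. Here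
`L Θ w = ∑ z, p Θ true z w`, `f_true = f`, `f_false = 1 - f`,
`a_true = a₁`, `a_false = a₀`. -/
theorem expected_correction_score {W Z : Type*} [Fintype W] [Fintype Z]
    (k : ℕ) (p : (Fin k → ℝ) → Bool → Z → W → ℝ) (Θ₀ : Fin k → ℝ)
    (hp_nonneg : ∀ Θ y z w, 0 ≤ p Θ y z w)
    (hp_sum : ∀ Θ w, ∑ y : Bool, ∑ z : Z, p Θ y z w = 1)
    (hp_diff : ∀ y z w, DifferentiableAt ℝ (fun Θ => p Θ y z w) Θ₀)
    (hp_pos : ∀ y z w, 0 < p Θ₀ y z w)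
    (P : W → ℝ) (hP_nonneg : ∀ w, 0 ≤ P w) (hP_sum : ∑ w, P w = 1)
    (a₀ a₁ : ℝ) (ha₀ : 0 < a₀) (ha₁ : 0 < a₁) (ha : a₀ + a₁ = 1)
    (f : ℝ) (hf : f = ∑ w, P w * ∑ z : Z, p Θ₀ true z w)
    (hf0 : 0 < f) (hf1 : f < 1)
    (lam₀ : ℝ) (hlam : lam₀ = a₁ / f - a₀ / (1 - f)) :
    ∑ y : Bool, ∑ z : Z, ∑ w : W,
      ((if y then a₁ else a₀) / (if y then f else 1 - f) * P w * p Θ₀ y z w) •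
        fderiv ℝ
          (fun Θ => Real.log (1 + lam₀ * ((∑ z' : Z, p Θ true z' w) - f))) Θ₀
      = lam₀ • ∑ w : W, P w • fderiv ℝ (fun Θ => ∑ z : Z, p Θ true z w) Θ₀ :=
  expected_correction_score_general k p Θ₀ hp_nonneg hp_sum hp_diff P a₀ a₁ ha₀ ha₁ ha f hf0 hf1
    lam₀ hlam
end

section
/- (Lemma 1, discrete version.) In the discrete case-control model, the modified profile score has zero expectation at the true parameter: Σ_{y,z,w} (a_y/f_y) P(w) p(Θ_0, y, z, w) · ∇_Θ [ log p(Θ, y, z, w) − log(1 + λ_0 (L(Θ, w) − f)) ]|_{Θ=Θ_0} = 0, where f_true := f and f_false := 1 − f. -/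
/-!
Case-control sampling reweights the conditional pmf of `(Y, Z)` given `W = w` by
`c y = a_y / f_y`, and `λ₀` is chosen exactly so that `1 + λ₀ (L(Θ, w) - f)` is the
normalising constant `∑_{y,z} c y p(Θ, y, z, w)` for every `Θ`. The modified profile
score is therefore the score of the normalised family `c y p / ∑ c p`, and the score of
any differentiable family of pmfs has mean zero, since its mean is the derivative of
the constant total mass `1`.
-/

open Finset

theorem sum_mul_pos_of_sum_eq_one {ι : Type*} (s : Finset ι) {c q : ι → ℝ}
    (hc : ∀ i ∈ s, 0 < c i) (hq : ∀ i ∈ s, 0 ≤ q i) (hsum : ∑ i ∈ s, q i = 1) :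
    0 < ∑ i ∈ s, c i * q i := by
  obtain ⟨i, hi, hqi⟩ := exists_lt_of_sum_lt (s := s) (f := fun _ => (0 : ℝ)) (g := q)
    (by simp [hsum])
  exact sum_pos' (fun j hj => mul_nonneg (hc j hj).le (hq j hj)) ⟨i, hi, mul_pos (hc i hi) hqi⟩

theorem sum_mul_smul_fderiv_log_sub_log_sum_eq_zero {ι E : Type*} [Fintype ι]
    [NormedAddCommGroup E] [NormedSpace ℝ E] (c : ι → ℝ) (q : ι → E → ℝ) (x₀ : E)
    (hq : ∀ i, DifferentiableAt ℝ (q i) x₀) (hq₀ : ∀ i, q i x₀ ≠ 0)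
    (hg : ∑ i, c i * q i x₀ ≠ 0) :
    ∑ i, (c i * q i x₀) •
      fderiv ℝ (fun x => Real.log (q i x) - Real.log (∑ j, c j * q j x)) x₀ = 0 := by
  set g : E → ℝ := fun x => ∑ j, c j * q j x
  set Dg := ∑ j, c j • fderiv ℝ (q j) x₀
  have hDg : HasFDerivAt g Dg x₀ :=
    HasFDerivAt.fun_sum fun j _ => (hq j).hasFDerivAt.const_mul (c j)
  have hterm : ∀ i, fderiv ℝ (fun x => Real.log (q i x) - Real.log (g x)) x₀
      = (q i x₀)⁻¹ • fderiv ℝ (q i) x₀ - (g x₀)⁻¹ • Dg := fun i =>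
    (((hq i).hasFDerivAt.log (hq₀ i)).sub (hDg.log hg)).fderiv
  calc ∑ i, (c i * q i x₀) • fderiv ℝ (fun x => Real.log (q i x) - Real.log (g x)) x₀
      = Dg - (g x₀ * (g x₀)⁻¹) • Dg := by
        simp only [hterm, smul_sub, smul_smul, mul_inv_cancel_right₀ (hq₀ _), sum_sub_distrib,
          ← sum_smul, ← sum_mul, Dg, g]
    _ = 0 := by rw [mul_inv_cancel₀ hg, one_smul, sub_self]

section CaseControl

variable {a₀ a₁ f : ℝ}

noncomputable def caseControlWeight (a₀ a₁ f : ℝ) (y : Bool) : ℝ :=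
  (if y then a₁ else a₀) / (if y then f else 1 - f)

theorem caseControlWeight_pos (ha₀ : 0 < a₀) (ha₁ : 0 < a₁) (hf0 : 0 < f) (hf1 : f < 1)
    (y : Bool) : 0 < caseControlWeight a₀ a₁ f y := by
  cases y <;> simp only [caseControlWeight, Bool.false_eq_true, if_false, if_true] <;> bound

theorem one_add_mul_sum_sub_eq_sum_caseControlWeight_mul {Z : Type*} [Fintype Z]
    (ha : a₀ + a₁ = 1) (hf0 : f ≠ 0) (hf1 : f ≠ 1) {q : Bool → Z → ℝ}
    (hq : ∑ y, ∑ z, q y z = 1) :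
    1 + (a₁ / f - a₀ / (1 - f)) * (∑ z, q true z - f)
      = ∑ x : Bool × Z, caseControlWeight a₀ a₁ f x.1 * q x.1 x.2 := by
  have hf1' : 1 - f ≠ 0 := sub_ne_zero.mpr hf1.symm
  obtain rfl : a₀ = 1 - a₁ := by linarith
  obtain ⟨L, hL⟩ : ∃ L, ∑ z, q true z = L := ⟨_, rfl⟩
  have hfalse : ∑ z, q false z = 1 - L := by
    rw [Fintype.sum_bool] at hq
    linarith
  rw [Fintype.sum_prod_type' (fun y z => caseControlWeight (1 - a₁) a₁ f y * q y z),
    Fintype.sum_bool]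
  simp only [caseControlWeight, if_true, Bool.false_eq_true, if_false, ← mul_sum, hL, hfalse]
  field_simp
  ring

end CaseControl

theorem modified_profile_score_unbiased_general {W Z : Type*} [Fintype W] [Fintype Z]
    (k : ℕ) (p : (Fin k → ℝ) → Bool → Z → W → ℝ) (Θ₀ : Fin k → ℝ)
    (hp_sum : ∀ Θ w, ∑ y : Bool, ∑ z : Z, p Θ y z w = 1)
    (hp_diff : ∀ y z w, DifferentiableAt ℝ (fun Θ => p Θ y z w) Θ₀)
    (hp_pos : ∀ y z w, 0 < p Θ₀ y z w)
    (P : W → ℝ)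
    (a₀ a₁ : ℝ) (ha₀ : 0 < a₀) (ha₁ : 0 < a₁) (ha : a₀ + a₁ = 1)
    (f : ℝ)
    (hf0 : 0 < f) (hf1 : f < 1)
    (lam₀ : ℝ) (hlam : lam₀ = a₁ / f - a₀ / (1 - f)) :
    ∑ y : Bool, ∑ z : Z, ∑ w : W,
      ((if y then a₁ else a₀) / (if y then f else 1 - f) * P w * p Θ₀ y z w) •
        fderiv ℝ
          (fun Θ => Real.log (p Θ y z w)
            - Real.log (1 + lam₀ * ((∑ z' : Z, p Θ true z' w) - f))) Θ₀
      = 0 := by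
  subst hlam
  show ∑ y, ∑ z, ∑ w, (caseControlWeight a₀ a₁ f y * P w * p Θ₀ y z w) • _ = 0
  have hnormaliser : ∀ Θ w, 1 + (a₁ / f - a₀ / (1 - f)) * ((∑ z', p Θ true z' w) - f)
      = ∑ x : Bool × Z, caseControlWeight a₀ a₁ f x.1 * p Θ x.1 x.2 w := fun Θ w =>
    one_add_mul_sum_sub_eq_sum_caseControlWeight_mul ha hf0.ne' hf1.ne (hp_sum Θ w)
  rw [sum_congr rfl fun y _ => sum_comm, sum_comm]
  refine sum_eq_zero fun w _ => ?_
  simp only [hnormaliser, mul_comm _ (P w), mul_assoc, mul_smul (P w)]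
  rw [← Fintype.sum_prod_type'
    (fun y z => P w • ((caseControlWeight a₀ a₁ f y * p Θ₀ y z w) • _)), ← smul_sum]
  have hpos : 0 < ∑ x : Bool × Z, caseControlWeight a₀ a₁ f x.1 * p Θ₀ x.1 x.2 w :=
    sum_mul_pos_of_sum_eq_one _ (fun x _ => caseControlWeight_pos ha₀ ha₁ hf0 hf1 x.1)
      (fun x _ => (hp_pos x.1 x.2 w).le)
      ((Fintype.sum_prod_type' fun y z => p Θ₀ y z w).trans (hp_sum Θ₀ w))
  exact smul_eq_zero_of_right _ <|
    sum_mul_smul_fderiv_log_sub_log_sum_eq_zero (fun x : Bool × Z => caseControlWeight a₀ a₁ f x.1)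
      (fun x Θ => p Θ x.1 x.2 w) Θ₀
      (fun x => hp_diff x.1 x.2 w) (fun x => (hp_pos x.1 x.2 w).ne') hpos.ne'

/-- Lemma 1 of the paper (discrete version): the modified profile score has
zero expectation at the true parameter under case-control sampling. Here
`L Θ w = ∑ z, p Θ true z w`, `f_true = f`, `f_false = 1 - f`,
`a_true = a₁`, `a_false = a₀`, and `λ₀ = a₁/f - a₀/(1-f)`. -/
theorem modified_profile_score_unbiased {W Z : Type*} [Fintype W] [Fintype Z]
    (k : ℕ) (p : (Fin k → ℝ) → Bool → Z → W → ℝ) (Θ₀ : Fin k → ℝ)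
    (hp_nonneg : ∀ Θ y z w, 0 ≤ p Θ y z w)
    (hp_sum : ∀ Θ w, ∑ y : Bool, ∑ z : Z, p Θ y z w = 1)
    (hp_diff : ∀ y z w, DifferentiableAt ℝ (fun Θ => p Θ y z w) Θ₀)
    (hp_pos : ∀ y z w, 0 < p Θ₀ y z w)
    (P : W → ℝ) (hP_nonneg : ∀ w, 0 ≤ P w) (hP_sum : ∑ w, P w = 1)
    (a₀ a₁ : ℝ) (ha₀ : 0 < a₀) (ha₁ : 0 < a₁) (ha : a₀ + a₁ = 1)
    (f : ℝ) (hf : f = ∑ w, P w * ∑ z : Z, p Θ₀ true z w)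
    (hf0 : 0 < f) (hf1 : f < 1)
    (lam₀ : ℝ) (hlam : lam₀ = a₁ / f - a₀ / (1 - f)) :
    ∑ y : Bool, ∑ z : Z, ∑ w : W,
      ((if y then a₁ else a₀) / (if y then f else 1 - f) * P w * p Θ₀ y z w) •
        fderiv ℝ
          (fun Θ => Real.log (p Θ y z w)
            - Real.log (1 + lam₀ * ((∑ z' : Z, p Θ true z' w) - f))) Θ₀
      = 0 :=
  modified_profile_score_unbiased_general k p Θ₀ hp_sum hp_diff hp_pos P a₀ a₁ ha₀ ha₁ ha f hf0 hf1
    lam₀ hlam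
end

section
/- (Ascent property of the modified EM algorithm.) Let l_2 : ℝ^k → ℝ be arbitrary and define the modified profile log-likelihood l_mp(Θ) := l_1(Θ) − l_2(Θ), where l_1(Θ) := Σ_{u ∈ U} log Σ_{h ∈ H} q(Θ, u, h). If Θ'' satisfies Q(Θ'' | Θ') − l_2(Θ'') ≥ Q(Θ' | Θ') − l_2(Θ') (in particular, if Θ'' maximizes Θ ↦ Q(Θ | Θ') − l_2(Θ)), then l_mp(Θ'') ≥ l_mp(Θ'). Consequently the iterates of the modified EM algorithm produce a nondecreasing sequence l_mp(Θ^(0)) ≤ l_mp(Θ^(1)) ≤ l_mp(Θ^(2)) ≤ ⋯. -/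
open Finset

/-!
The log-likelihood gain `l₁(Θ'') - l₁(Θ')` dominates the gain `Q(Θ'' | Θ') - Q(Θ' | Θ')` of the
E-step objective: family by family, this difference is a weighted mean of
`log (q Θ'' u h / q Θ' u h)` with weights proportional to `q Θ' u h`, which by concavity of `log`
(Jensen) is at most `log (∑ h, q Θ'' u h / ∑ h, q Θ' u h)`. Since `l₂` enters both sides of the
comparison identically, any step increasing `Q - l₂` increases `l₁ - l₂`.
-/

theorem sum_weighted_log_sub_le_log_sum_sub {ι : Type*} (s : Finset ι) {a b : ι → ℝ}
    (ha : ∀ i ∈ s, 0 < a i) (hb : ∀ i ∈ s, 0 < b i) :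
    ∑ i ∈ s, (a i / ∑ j ∈ s, a j) * Real.log (b i)
        - ∑ i ∈ s, (a i / ∑ j ∈ s, a j) * Real.log (a i)
      ≤ Real.log (∑ i ∈ s, b i) - Real.log (∑ i ∈ s, a i) := by
  rcases s.eq_empty_or_nonempty with rfl | hs
  · simp
  have hA : 0 < ∑ j ∈ s, a j := sum_pos ha hs
  have hB : 0 < ∑ j ∈ s, b j := sum_pos hb hs
  have jensen := strictConcaveOn_log_Ioi.concaveOn.le_map_sum
    (t := s) (w := fun i => a i / ∑ j ∈ s, a j) (p := fun i => b i / a i)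
    (fun i hi => (div_pos (ha i hi) hA).le) (by rw [← sum_div, div_self hA.ne'])
    (fun i hi => div_pos (hb i hi) (ha i hi))
  simp only [smul_eq_mul] at jensen
  calc ∑ i ∈ s, (a i / ∑ j ∈ s, a j) * Real.log (b i)
        - ∑ i ∈ s, (a i / ∑ j ∈ s, a j) * Real.log (a i)
      = ∑ i ∈ s, (a i / ∑ j ∈ s, a j) * Real.log (b i / a i) := by
        rw [← sum_sub_distrib]
        refine sum_congr rfl fun i hi => ?_
        rw [Real.log_div (hb i hi).ne' (ha i hi).ne']
        ring
    _ ≤ Real.log (∑ i ∈ s, (a i / ∑ j ∈ s, a j) * (b i / a i)) := jensen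
    _ = Real.log ((∑ i ∈ s, b i) / ∑ i ∈ s, a i) := by
        rw [sum_div]
        refine congrArg Real.log (sum_congr rfl fun i hi => ?_)
        field_simp [(ha i hi).ne']
    _ = Real.log (∑ i ∈ s, b i) - Real.log (∑ i ∈ s, a i) := Real.log_div hB.ne' hA.ne'

section MixtureEM

variable {P U H : Type*} [Fintype U] [Fintype H]

/-- The E-step objective `Q(Θ | Θ')`. -/
noncomputable def emObjective (q : P → U → H → ℝ) (Θ' Θ : P) : ℝ :=
  ∑ u, ∑ h, (q Θ' u h / ∑ h', q Θ' u h') * Real.log (q Θ u h)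

/-- The log-likelihood `l₁(Θ)`. -/
noncomputable def mixtureLogLik (q : P → U → H → ℝ) (Θ : P) : ℝ :=
  ∑ u, Real.log (∑ h, q Θ u h)

theorem emObjective_sub_le_mixtureLogLik_sub {q : P → U → H → ℝ} (hq : ∀ Θ u h, 0 < q Θ u h)
    (Θ' Θ'' : P) :
    emObjective q Θ' Θ'' - emObjective q Θ' Θ' ≤ mixtureLogLik q Θ'' - mixtureLogLik q Θ' := by
  rw [emObjective, emObjective, mixtureLogLik, mixtureLogLik, ← sum_sub_distrib,
    ← sum_sub_distrib]
  exact sum_le_sum fun u _ => sum_weighted_log_sub_le_log_sum_sub univ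
    (fun h _ => hq Θ' u h) (fun h _ => hq Θ'' u h)

theorem mixtureLogLik_sub_le_of_emObjective_sub_le {q : P → U → H → ℝ}
    (hq : ∀ Θ u h, 0 < q Θ u h) (l₂ : P → ℝ) {Θ' Θ'' : P}
    (hstep : emObjective q Θ' Θ' - l₂ Θ' ≤ emObjective q Θ' Θ'' - l₂ Θ'') :
    mixtureLogLik q Θ' - l₂ Θ' ≤ mixtureLogLik q Θ'' - l₂ Θ'' := by
  linarith [emObjective_sub_le_mixtureLogLik_sub hq Θ' Θ'']

end MixtureEM

theorem modified_em_ascent_general {U H : Type*} [Fintype U] [Fintype H]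
    (k : ℕ) (q : (Fin k → ℝ) → U → H → ℝ)
    (hq : ∀ Θ u h, 0 < q Θ u h) (l₂ : (Fin k → ℝ) → ℝ) :
    (∀ Θ' Θ'' : Fin k → ℝ,
      (∑ u, ∑ h, (q Θ' u h / ∑ h', q Θ' u h') * Real.log (q Θ'' u h)) - l₂ Θ''
        ≥ (∑ u, ∑ h, (q Θ' u h / ∑ h', q Θ' u h') * Real.log (q Θ' u h)) - l₂ Θ' →
      (∑ u, Real.log (∑ h, q Θ'' u h)) - l₂ Θ''
        ≥ (∑ u, Real.log (∑ h, q Θ' u h)) - l₂ Θ') ∧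
    (∀ Θseq : ℕ → (Fin k → ℝ),
      (∀ r : ℕ,
        (∑ u, ∑ h, (q (Θseq r) u h / ∑ h', q (Θseq r) u h') *
            Real.log (q (Θseq (r + 1)) u h)) - l₂ (Θseq (r + 1))
          ≥ (∑ u, ∑ h, (q (Θseq r) u h / ∑ h', q (Θseq r) u h') *
              Real.log (q (Θseq r) u h)) - l₂ (Θseq r)) →
      Monotone fun r => (∑ u, Real.log (∑ h, q (Θseq r) u h)) - l₂ (Θseq r)) :=
  ⟨fun _ _ hstep => mixtureLogLik_sub_le_of_emObjective_sub_le hq l₂ hstep,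
    fun _ hstep => monotone_nat_of_le_succ fun r =>
      mixtureLogLik_sub_le_of_emObjective_sub_le hq l₂ (hstep r)⟩

/-- Ascent property of the modified EM algorithm: with
`l₁(Θ) = ∑ u, log (∑ h, q Θ u h)`, `l_mp = l₁ - l₂`, and E-step objective
`Q(Θ | Θ') = ∑ u ∑ h, (q Θ' u h / ∑ h', q Θ' u h') * log (q Θ u h)`,
if `Q(Θ'' | Θ') - l₂(Θ'') ≥ Q(Θ' | Θ') - l₂(Θ')` then
`l_mp(Θ'') ≥ l_mp(Θ')`; consequently the modified EM iterates produce a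
nondecreasing sequence of `l_mp` values. -/
theorem modified_em_ascent {U H : Type*} [Fintype U] [Fintype H] [Nonempty H]
    (k : ℕ) (q : (Fin k → ℝ) → U → H → ℝ)
    (hq : ∀ Θ u h, 0 < q Θ u h) (l₂ : (Fin k → ℝ) → ℝ) :
    (∀ Θ' Θ'' : Fin k → ℝ,
      (∑ u, ∑ h, (q Θ' u h / ∑ h', q Θ' u h') * Real.log (q Θ'' u h)) - l₂ Θ''
        ≥ (∑ u, ∑ h, (q Θ' u h / ∑ h', q Θ' u h') * Real.log (q Θ' u h)) - l₂ Θ' →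
      (∑ u, Real.log (∑ h, q Θ'' u h)) - l₂ Θ''
        ≥ (∑ u, Real.log (∑ h, q Θ' u h)) - l₂ Θ') ∧
    (∀ Θseq : ℕ → (Fin k → ℝ),
      (∀ r : ℕ,
        (∑ u, ∑ h, (q (Θseq r) u h / ∑ h', q (Θseq r) u h') *
            Real.log (q (Θseq (r + 1)) u h)) - l₂ (Θseq (r + 1))
          ≥ (∑ u, ∑ h, (q (Θseq r) u h / ∑ h', q (Θseq r) u h') *
              Real.log (q (Θseq r) u h)) - l₂ (Θseq r)) →
      Monotone fun r => (∑ u, Real.log (∑ h, q (Θseq r) u h)) - l₂ (Θseq r)) :=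
  modified_em_ascent_general k q hq l₂
end

section
/- Let S ≥ 1, let μ_1, ..., μ_S > 0 with Σ_s μ_s = 1, let A ⊆ {1,...,S}, and set θ := Σ_{s ∈ A} μ_s; assume 0 < θ < 1. For every F ∈ [0,1), define D_F(i,j) := F μ_i · 1{i=j} + (1−F) μ_i μ_j and P_F(g=1) := Σ over pairs (i,j) with exactly one of i, j in A of D_F(i,j). Then for every i ∈ A, j ∉ A, and every l ∈ {1,...,S}: (1−F) μ_i μ_j μ_l / P_F(g=1) = μ_i μ_j μ_l / (2 θ (1−θ)); in particular this ratio is the same for all F ∈ [0,1). -/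
open Finset

/-- Robustness of the modified profile likelihood to violation of
Hardy-Weinberg equilibrium: under the fixation-index model
`D_F(i,j) = F μ_i 1{i=j} + (1-F) μ_i μ_j`, with heterozygous genotype
probability `P_F(g=1)` at the target SNP, the ratio
`(1-F) μ_i μ_j μ_l / P_F(g=1)` equals `μ_i μ_j μ_l / (2θ(1-θ))`, which is
free of the fixation index `F`. -/
theorem hwe_robust_ratio (S : ℕ) (hS : 1 ≤ S)
    (μ : Fin S → ℝ) (hμ_pos : ∀ s, 0 < μ s) (hμ_sum : ∑ s, μ s = 1)
    (A : Finset (Fin S)) (θ : ℝ) (hθ : θ = ∑ s ∈ A, μ s)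
    (hθ0 : 0 < θ) (hθ1 : θ < 1) :
    ∀ F : ℝ, 0 ≤ F → F < 1 →
      ∀ i ∈ A, ∀ j ∉ A, ∀ l : Fin S,
        (1 - F) * μ i * μ j * μ l /
            (∑ i', ∑ j', (if (i' ∈ A ∧ j' ∉ A) ∨ (i' ∉ A ∧ j' ∈ A) then
              F * μ i' * (if i' = j' then 1 else 0) + (1 - F) * μ i' * μ j'
              else 0))
          = μ i * μ j * μ l / (2 * θ * (1 - θ)) := by
  intro F hF0 hF1 i hi j hj l
  have hA : ∑ s, (if s ∈ A then μ s else 0) = θ := by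
    rw [Finset.sum_ite_mem, Finset.univ_inter, hθ]
  have hB : ∑ s, (if s ∈ A then 0 else μ s) = 1 - θ := by
    have hsplit : ∑ s, ((if s ∈ A then μ s else 0) + (if s ∈ A then 0 else μ s))
        = ∑ s, μ s := by
      apply Finset.sum_congr rfl
      intro s _
      by_cases h : s ∈ A <;> simp [h]
    rw [Finset.sum_add_distrib, hA, hμ_sum] at hsplit
    linarith
  have key : (∑ i', ∑ j', (if (i' ∈ A ∧ j' ∉ A) ∨ (i' ∉ A ∧ j' ∈ A) then
      F * μ i' * (if i' = j' then 1 else 0) + (1 - F) * μ i' * μ j'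
      else 0)) = (1 - F) * (2 * θ * (1 - θ)) := by
    have hpt : ∀ i' j' : Fin S,
        (if (i' ∈ A ∧ j' ∉ A) ∨ (i' ∉ A ∧ j' ∈ A) then
          F * μ i' * (if i' = j' then 1 else 0) + (1 - F) * μ i' * μ j'
          else 0)
        = (1 - F) * ((if i' ∈ A then μ i' else 0) * (if j' ∈ A then 0 else μ j')
            + (if i' ∈ A then 0 else μ i') * (if j' ∈ A then μ j' else 0)) := by
      intro i' j'
      by_cases h1 : i' ∈ A <;> by_cases h2 : j' ∈ A
      · simp [h1, h2]
      · have hne : i' ≠ j' := fun h => h2 (h ▸ h1)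
        simp [h1, h2, hne]
        ring
      · have hne : i' ≠ j' := fun h => h1 (h ▸ h2)
        simp [h1, h2, hne]
        ring
      · simp [h1, h2]
    calc (∑ i', ∑ j', (if (i' ∈ A ∧ j' ∉ A) ∨ (i' ∉ A ∧ j' ∈ A) then
          F * μ i' * (if i' = j' then 1 else 0) + (1 - F) * μ i' * μ j'
          else 0))
        = ∑ i', ∑ j', (1 - F) * ((if i' ∈ A then μ i' else 0) * (if j' ∈ A then 0 else μ j')
            + (if i' ∈ A then 0 else μ i') * (if j' ∈ A then μ j' else 0)) := by
          exact Finset.sum_congr rfl fun i' _ => Finset.sum_congr rfl fun j' _ => hpt i' j'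
      _ = (1 - F) * ((∑ s, (if s ∈ A then μ s else 0)) * (∑ s, (if s ∈ A then 0 else μ s))
            + (∑ s, (if s ∈ A then 0 else μ s)) * (∑ s, (if s ∈ A then μ s else 0))) := by
          simp_rw [← Finset.mul_sum, Finset.sum_add_distrib, ← Finset.mul_sum,
            ← Finset.sum_mul]
      _ = (1 - F) * (2 * θ * (1 - θ)) := by rw [hA, hB]; ring
  rw [key]
  have h1F : (1 : ℝ) - F ≠ 0 := by linarith
  rw [mul_assoc, mul_assoc, mul_div_mul_left _ _ h1F, ← mul_assoc]
end
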